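/- arXiv:2201.09758 — 3 statements merged into one kernel-verified Lean document; each statement's English description precedes it below -/
import Mathlib

section
/- Let R be a ring with identity and P a two-sided ideal. P is an almost prime ideal if and only if for all a, b ∈ R, (aR + ℤa)(bR + ℤb) ⊆ P together with (aR + ℤa)(bR + ℤb) ⊄ P² implies a ∈ P or b ∈ P. -/
variable {R : Type*}

/-- `P` is a right ideal of the (possibly nonunital, noncommutative) ring `R`. -/
def IsRightIdeal [NonUnitalRing R] (P : AddSubgroup R) : Prop :=
  ∀ a ∈ P, ∀ r : R, a * r ∈ P

/-- The product `AB` of two right ideals: the additive subgroup generated by products. -/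
def idealMul [NonUnitalRing R] (A B : AddSubgroup R) : AddSubgroup R :=
  AddSubgroup.closure {x : R | ∃ a ∈ A, ∃ b ∈ B, x = a * b}

/-- `P` is a two-sided ideal of `R`. -/
def IsTwoSidedIdealSub [NonUnitalRing R] (P : AddSubgroup R) : Prop :=
  ∀ a ∈ P, ∀ r : R, a * r ∈ P ∧ r * a ∈ P

/-- `P` is an almost prime (two-sided) ideal. -/
def IsAlmostPrimeTwoSided [NonUnitalRing R] (P : AddSubgroup R) : Prop :=
  IsTwoSidedIdealSub P ∧ P ≠ ⊤ ∧
    ∀ A B : AddSubgroup R, IsTwoSidedIdealSub A → IsTwoSidedIdealSub B →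
      idealMul A B ≤ P → ¬ idealMul A B ≤ idealMul P P → A ≤ P ∨ B ≤ P

/-- The right ideal `aR` generated by `a` in a ring with identity. -/
def rIdeal [Ring R] (a : R) : AddSubgroup R where
  carrier := Set.range (fun r => a * r)
  zero_mem' := ⟨0, mul_zero a⟩
  add_mem' := by rintro x y ⟨r, rfl⟩ ⟨s, rfl⟩; exact ⟨r + s, mul_add a r s⟩
  neg_mem' := by rintro x ⟨r, rfl⟩; exact ⟨-r, mul_neg a r⟩

lemma idealMul_le_iff [NonUnitalRing R] {A B P : AddSubgroup R} :
    idealMul A B ≤ P ↔ ∀ a ∈ A, ∀ b ∈ B, a * b ∈ P := by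
  rw [idealMul, AddSubgroup.closure_le]
  constructor
  · intro h a ha b hb; exact h ⟨a, ha, b, hb, rfl⟩
  · rintro h x ⟨a, ha, b, hb, rfl⟩; exact h a ha b hb

lemma mul_mem_idealMul [NonUnitalRing R] {A B : AddSubgroup R} {a b : R}
    (ha : a ∈ A) (hb : b ∈ B) : a * b ∈ idealMul A B :=
  AddSubgroup.subset_closure ⟨a, ha, b, hb, rfl⟩

lemma mem_rIdeal [Ring R] (a r : R) : a * r ∈ rIdeal a := ⟨r, rfl⟩

lemma self_mem_rIdeal [Ring R] (a : R) : a ∈ rIdeal a := ⟨1, mul_one a⟩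

/-- two-sided ideal generated by `a` -/
def tIdeal [Ring R] (a : R) : AddSubgroup R :=
  AddSubgroup.closure {x : R | ∃ r s : R, x = r * a * s}

lemma self_mem_tIdeal [Ring R] (a : R) : a ∈ tIdeal a :=
  AddSubgroup.subset_closure ⟨1, 1, by simp⟩

lemma tIdeal_twoSided [Ring R] (a : R) : IsTwoSidedIdealSub (tIdeal a) := by
  intro x hx t
  constructor
  · refine AddSubgroup.closure_induction (p := fun x _ => x * t ∈ tIdeal a)
      (fun y hy => ?_) (by simpa using zero_mem (tIdeal a)) ?_ ?_ hx
    · obtain ⟨r, s, rfl⟩ := hy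
      exact AddSubgroup.subset_closure ⟨r, s * t, by noncomm_ring⟩
    · intro x y _ _ hx hy
      show (x + y) * t ∈ _; rw [add_mul]; exact add_mem hx hy
    · intro x _ hx; show (-x) * t ∈ _; rw [neg_mul]; exact neg_mem hx
  · refine AddSubgroup.closure_induction (p := fun x _ => t * x ∈ tIdeal a)
      (fun y hy => ?_) (by simpa using zero_mem (tIdeal a)) ?_ ?_ hx
    · obtain ⟨r, s, rfl⟩ := hy
      exact AddSubgroup.subset_closure ⟨t * r, s, by noncomm_ring⟩
    · intro x y _ _ hx hy
      show t * (x + y) ∈ _; rw [mul_add]; exact add_mem hx hy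
    · intro x _ hx; show t * (-x) ∈ _; rw [mul_neg]; exact neg_mem hx

/-- A two-sided ideal `P` of a ring with identity is almost prime iff
`(a⟩(b⟩ ⊆ P` and `(a⟩(b⟩ ⊄ P²` implies `a ∈ P` or `b ∈ P`, where `(a⟩ = aR`. -/
theorem almostPrime_iff_principal_right [Ring R] (P : AddSubgroup R)
    (hP : IsTwoSidedIdealSub P) (hproper : P ≠ ⊤) :
    IsAlmostPrimeTwoSided P ↔
      ∀ a b : R, idealMul (rIdeal a) (rIdeal b) ≤ P →
        ¬ idealMul (rIdeal a) (rIdeal b) ≤ idealMul P P → a ∈ P ∨ b ∈ P := by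
  constructor
  · rintro ⟨-, -, hap⟩ a b hle hnle
    -- pass to two-sided ideals generated by a, b
    have hTle : idealMul (tIdeal a) (tIdeal b) ≤ P := by
      rw [idealMul_le_iff] at hle ⊢
      intro x hx y hy
      refine AddSubgroup.closure_induction (p := fun x _ => x * y ∈ P)
        (fun x' hx' => ?_) (by simpa using zero_mem P) (fun u v _ _ hu hv => by
          show (u + v) * y ∈ P; rw [add_mul]; exact add_mem hu hv)
        (fun u _ hu => by show (-u) * y ∈ P; rw [neg_mul]; exact neg_mem hu) hx
      · -- x' = r * a * s, induct on y
        obtain ⟨r, s, rfl⟩ := hx'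
        refine AddSubgroup.closure_induction (p := fun y _ => (r * a * s) * y ∈ P)
          (fun y' hy' => ?_) (by simpa using zero_mem P) (fun u v _ _ hu hv => by
            show (r * a * s) * (u + v) ∈ P; rw [mul_add]; exact add_mem hu hv)
          (fun u _ hu => by show (r * a * s) * (-u) ∈ P; rw [mul_neg]; exact neg_mem hu) hy
        · obtain ⟨t, u, rfl⟩ := hy'
          have h1 : (a * (s * t)) * (b * u) ∈ P :=
            hle _ (mem_rIdeal a _) _ (mem_rIdeal b _)
          have : (r * a * s) * (t * b * u) = r * ((a * (s * t)) * (b * u)) := by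
            noncomm_ring
          rw [this]
          exact (hP _ h1 r).2
    have hTnle : ¬ idealMul (tIdeal a) (tIdeal b) ≤ idealMul P P := by
      intro h
      apply hnle
      refine le_trans ?_ h
      rw [idealMul_le_iff]
      rintro x ⟨r, rfl⟩ y ⟨s, rfl⟩
      exact mul_mem_idealMul
        ((tIdeal_twoSided a a (self_mem_tIdeal a) r).1)
        ((tIdeal_twoSided b b (self_mem_tIdeal b) s).1)
    rcases hap _ _ (tIdeal_twoSided a) (tIdeal_twoSided b) hTle hTnle with h | h
    · exact Or.inl (h (self_mem_tIdeal a))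
    · exact Or.inr (h (self_mem_tIdeal b))
  · intro H
    refine ⟨hP, hproper, fun A B hA hB hAB hnle => ?_⟩
    by_contra hcon
    push_neg at hcon
    obtain ⟨hAP, hBP⟩ := hcon
    obtain ⟨a', ha'A, ha'P⟩ := SetLike.not_le_iff_exists.mp hAP
    obtain ⟨b', hb'B, hb'P⟩ := SetLike.not_le_iff_exists.mp hBP
    rw [idealMul_le_iff] at hAB
    -- key: for a ∈ A \ P, b ∈ B \ P, (a⟩(b⟩ ≤ P²
    have key : ∀ a ∈ A, ∀ b ∈ B, a ∉ P → b ∉ P →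
        idealMul (rIdeal a) (rIdeal b) ≤ idealMul P P := by
      intro a haA b hbB haP hbP
      by_contra hn
      have hle : idealMul (rIdeal a) (rIdeal b) ≤ P := by
        rw [idealMul_le_iff]
        rintro x ⟨r, rfl⟩ y ⟨s, rfl⟩
        exact hAB _ ((hA a haA r).1) _ ((hB b hbB s).1)
      rcases H a b hle hn with h | h
      exacts [haP h, hbP h]
    have key' : ∀ a ∈ A, ∀ b ∈ B, a ∉ P → b ∉ P → ∀ r s : R,
        (a * r) * (b * s) ∈ idealMul P P := fun a haA b hbB haP hbP r s =>
      key a haA b hbB haP hbP (mul_mem_idealMul (mem_rIdeal a r) (mem_rIdeal b s))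
    -- all products of A and B land in P²
    have main : ∀ a ∈ A, ∀ b ∈ B, ∀ r s : R,
        (a * r) * (b * s) ∈ idealMul P P := by
      intro a haA b hbB r s
      by_cases haP : a ∈ P <;> by_cases hbP : b ∈ P
      · -- a ∈ P, b ∈ P
        have h1 := key' (a + a') (add_mem haA ha'A) (b + b') (add_mem hbB hb'B)
          (fun h => ha'P (by simpa using sub_mem h haP))
          (fun h => hb'P (by simpa using sub_mem h hbP)) r s
        have h2 := key' a' ha'A (b + b') (add_mem hbB hb'B) ha'P
          (fun h => hb'P (by simpa using sub_mem h hbP)) r s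
        have h3 := key' (a + a') (add_mem haA ha'A) b' hb'B
          (fun h => ha'P (by simpa using sub_mem h haP)) hb'P r s
        have h4 := key' a' ha'A b' hb'B ha'P hb'P r s
        have heq : (a * r) * (b * s) =
            ((a + a') * r) * ((b + b') * s) - (a' * r) * ((b + b') * s)
              - ((a + a') * r) * (b' * s) + (a' * r) * (b' * s) := by noncomm_ring
        rw [heq]
        exact add_mem (sub_mem (sub_mem h1 h2) h3) h4
      · -- a ∈ P, b ∉ P
        have h1 := key' (a + a') (add_mem haA ha'A) b hbB
          (fun h => ha'P (by simpa using sub_mem h haP)) hbP r s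
        have h2 := key' a' ha'A b hbB ha'P hbP r s
        have heq : (a * r) * (b * s) =
            ((a + a') * r) * (b * s) - (a' * r) * (b * s) := by noncomm_ring
        rw [heq]; exact sub_mem h1 h2
      · -- a ∉ P, b ∈ P
        have h1 := key' a haA (b + b') (add_mem hbB hb'B) haP
          (fun h => hb'P (by simpa using sub_mem h hbP)) r s
        have h2 := key' a haA b' hb'B haP hb'P r s
        have heq : (a * r) * (b * s) =
            (a * r) * ((b + b') * s) - (a * r) * (b' * s) := by noncomm_ring
        rw [heq]; exact sub_mem h1 h2
      · exact key' a haA b hbB haP hbP r s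
    apply hnle
    rw [idealMul_le_iff]
    intro x hx y hy
    have := main x hx y hy 1 1
    simpa using this
end

section
/- Let f : R → S be a surjective ring homomorphism and P a right ideal of R with ker f ⊆ P². If f(P) is an almost prime right ideal of S, then P is an almost prime right ideal of R. -/
variable {R : Type*}

/-- `P` is an almost prime right ideal. -/
def IsAlmostPrimeRight [NonUnitalRing R] (P : AddSubgroup R) : Prop :=
  IsRightIdeal P ∧ P ≠ ⊤ ∧
    ∀ A B : AddSubgroup R, IsRightIdeal A → IsRightIdeal B →
      idealMul A B ≤ P → ¬ idealMul A B ≤ idealMul P P → A ≤ P ∨ B ≤ P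

variable {S : Type*}

lemma idealMul_le_left [NonUnitalRing R] {A B : AddSubgroup R} (hA : IsRightIdeal A) :
    idealMul A B ≤ A := by
  apply AddSubgroup.closure_le A |>.2
  rintro x ⟨a, ha, b, hb, rfl⟩
  exact hA a ha b

lemma map_idealMul [NonUnitalRing R] [NonUnitalRing S] (f : R →ₙ+* S) (A B : AddSubgroup R) :
    AddSubgroup.map f.toAddMonoidHom (idealMul A B)
      = idealMul (AddSubgroup.map f.toAddMonoidHom A) (AddSubgroup.map f.toAddMonoidHom B) := by
  rw [idealMul, AddMonoidHom.map_closure, idealMul]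
  congr 1
  ext y
  constructor
  · rintro ⟨x, ⟨a, ha, b, hb, rfl⟩, rfl⟩
    exact ⟨f a, ⟨a, ha, rfl⟩, f b, ⟨b, hb, rfl⟩, (map_mul f a b)⟩
  · rintro ⟨_, ⟨a, ha, rfl⟩, _, ⟨b, hb, rfl⟩, rfl⟩
    exact ⟨a * b, ⟨a, ha, b, hb, rfl⟩, map_mul f a b⟩

lemma map_isRightIdeal [NonUnitalRing R] [NonUnitalRing S] (f : R →ₙ+* S)
    (hf : Function.Surjective f) {A : AddSubgroup R} (hA : IsRightIdeal A) :
    IsRightIdeal (AddSubgroup.map f.toAddMonoidHom A) := by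
  rintro _ ⟨a, ha, rfl⟩ s
  obtain ⟨r, rfl⟩ := hf s
  exact ⟨a * r, hA a ha r, map_mul f a r⟩

/-- If `f : R → S` is a surjective ring homomorphism, `P` a right ideal of `R` with
`ker f ⊆ P²`, and `f(P)` is an almost prime right ideal of `S`, then `P` is an
almost prime right ideal of `R`. -/
theorem almostPrime_of_map [NonUnitalRing R] [NonUnitalRing S] (f : R →ₙ+* S)
    (hf : Function.Surjective f) (P : AddSubgroup R) (hP : IsRightIdeal P)
    (hker : ∀ x : R, f x = 0 → x ∈ idealMul P P)
    (h : IsAlmostPrimeRight (AddSubgroup.map f.toAddMonoidHom P)) :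
    IsAlmostPrimeRight P := by
  obtain ⟨-, hne, hmain⟩ := h
  have hPP : idealMul P P ≤ P := idealMul_le_left hP
  refine ⟨hP, ?_, ?_⟩
  · rintro rfl
    apply hne
    rw [eq_top_iff]
    rintro s -
    obtain ⟨r, rfl⟩ := hf s
    exact ⟨r, trivial, rfl⟩
  · intro A B hA hB hle hnle
    -- pull back membership in f(P) / f(P²)
    have pull : ∀ x : R, f x ∈ AddSubgroup.map f.toAddMonoidHom P → x ∈ P := by
      intro x ⟨p, hp, hpx⟩
      have : x - p ∈ idealMul P P := hker _ (by rw [map_sub, ← hpx]; simp)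
      have := hPP this
      have : x = (x - p) + p := by abel
      rw [this]; exact P.add_mem ‹x - p ∈ P› hp
    have pull2 : ∀ x : R,
        f x ∈ idealMul (AddSubgroup.map f.toAddMonoidHom P) (AddSubgroup.map f.toAddMonoidHom P)
        → x ∈ idealMul P P := by
      intro x hx
      rw [← map_idealMul] at hx
      obtain ⟨y, hy, hyx⟩ := hx
      have : x - y ∈ idealMul P P := hker _ (by rw [map_sub, ← hyx]; simp)
      have : x = (x - y) + y := by abel
      rw [this]; exact (idealMul P P).add_mem ‹x - y ∈ idealMul P P› hy
    have h1 : idealMul (AddSubgroup.map f.toAddMonoidHom A) (AddSubgroup.map f.toAddMonoidHom B)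
        ≤ AddSubgroup.map f.toAddMonoidHom P := by
      rw [← map_idealMul]
      rintro _ ⟨x, hx, rfl⟩
      exact ⟨x, hle hx, rfl⟩
    have h2 : ¬ idealMul (AddSubgroup.map f.toAddMonoidHom A) (AddSubgroup.map f.toAddMonoidHom B)
        ≤ idealMul (AddSubgroup.map f.toAddMonoidHom P) (AddSubgroup.map f.toAddMonoidHom P) := by
      intro hc
      apply hnle
      intro x hx
      apply pull2
      apply hc
      rw [← map_idealMul]
      exact ⟨x, hx, rfl⟩
    rcases hmain _ _ (map_isRightIdeal f hf hA) (map_isRightIdeal f hf hB) h1 h2 with hc | hc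
    · exact Or.inl fun a ha => pull a (hc ⟨a, ha, rfl⟩)
    · exact Or.inr fun b hb => pull b (hc ⟨b, hb, rfl⟩)
end

section
/- Let R be a ring, I a two-sided ideal of R, and P a right ideal with I ⊆ P. If P is an almost prime right ideal of R, then P/I is an almost prime right ideal of R/I. -/
variable {R : Type*}

/-- The ring congruence associated to a two-sided-ideal additive subgroup `N`. -/
def ringConOf [NonUnitalRing R] (N : AddSubgroup R)
    (hr : ∀ x ∈ N, ∀ r : R, x * r ∈ N) (hl : ∀ x ∈ N, ∀ r : R, r * x ∈ N) : RingCon R where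
  r x y := x - y ∈ N
  iseqv := ⟨fun x => by simpa using N.zero_mem, fun {x y} h => by simpa using N.neg_mem h,
    fun {x y z} h1 h2 => by simpa using N.add_mem h1 h2⟩
  add' := fun {a b c d} h1 h2 => by
    have h1' : a - b ∈ N := h1
    have h2' : c - d ∈ N := h2
    show a + c - (b + d) ∈ N
    rw [add_sub_add_comm]
    exact N.add_mem h1' h2'
  mul' := fun {a b c d} h1 h2 => by
    have h1' : a - b ∈ N := h1
    have h2' : c - d ∈ N := h2
    show a * c - b * d ∈ N
    have h3 : (a - b) * c ∈ N := hr _ h1' c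
    have h4 : b * (c - d) ∈ N := hl _ h2' b
    have h5 := N.add_mem h3 h4
    have e : (a - b) * c + b * (c - d) = a * c - b * d := by
      rw [sub_mul, mul_sub]; abel
    rwa [e] at h5

/-- The quotient map `R → R/N` as an additive monoid homomorphism. -/
def qmap [NonUnitalRing R] (c : RingCon R) : R →+ c.Quotient where
  toFun x := x
  map_zero' := rfl
  map_add' _ _ := rfl

/-! A surjective ring map `f : R → S` whose kernel lies in `P` induces a bijection between the
additive subgroups of `R` containing `ker f` and those of `S`, which respects right ideals and,
since `f` is multiplicative, products of right ideals. So every instance of the almost prime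
condition for `f P` pulls back to one for `P`, with `A = f⁻¹ A'` and `B = f⁻¹ B'`. -/

section Map

variable {S : Type*} [NonUnitalRing R] [NonUnitalRing S] (f : R →ₙ+* S)

theorem IsRightIdeal.comap {B : AddSubgroup S} (hB : IsRightIdeal B) :
    IsRightIdeal (B.comap (f : R →+ S)) := fun a ha r => by
  simpa [AddSubgroup.mem_comap] using hB (f a) ha (f r)

theorem IsRightIdeal.map_of_surjective (hf : Function.Surjective f) {P : AddSubgroup R}
    (hP : IsRightIdeal P) : IsRightIdeal (P.map (f : R →+ S)) := by
  rintro _ ⟨p, hp, rfl⟩ s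
  obtain ⟨r, rfl⟩ := hf s
  exact ⟨p * r, hP p hp r, map_mul f p r⟩

theorem idealMul_map (A B : AddSubgroup R) :
    (idealMul A B).map (f : R →+ S) = idealMul (A.map (f : R →+ S)) (B.map (f : R →+ S)) := by
  rw [idealMul, idealMul, AddMonoidHom.map_closure]
  congr 1
  ext x
  constructor
  · rintro ⟨_, ⟨a, ha, b, hb, rfl⟩, rfl⟩
    exact ⟨f a, ⟨a, ha, rfl⟩, f b, ⟨b, hb, rfl⟩, map_mul f a b⟩
  · rintro ⟨_, ⟨a, ha, rfl⟩, _, ⟨b, hb, rfl⟩, rfl⟩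
    exact ⟨a * b, ⟨a, ha, b, hb, rfl⟩, map_mul f a b⟩

theorem IsAlmostPrimeRight.map_of_surjective (hf : Function.Surjective f) {P : AddSubgroup R}
    (hker : (f : R →+ S).ker ≤ P) (hP : IsAlmostPrimeRight P) :
    IsAlmostPrimeRight (P.map (f : R →+ S)) := by
  obtain ⟨hPr, hPtop, hPprime⟩ := hP
  have hcomap : (P.map (f : R →+ S)).comap f = P := AddSubgroup.comap_map_eq_self hker
  refine ⟨hPr.map_of_surjective f hf, fun htop => hPtop ?_, ?_⟩
  · rw [← hcomap, htop, AddSubgroup.comap_top]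
  intro A' B' hA' hB' hle hnle
  have hA : (A'.comap (f : R →+ S)).map f = A' :=
    AddSubgroup.map_comap_eq_self_of_surjective hf A'
  have hB : (B'.comap (f : R →+ S)).map f = B' :=
    AddSubgroup.map_comap_eq_self_of_surjective hf B'
  have hmul_le : idealMul (A'.comap (f : R →+ S)) (B'.comap f) ≤ P := by
    rw [← hcomap, ← AddSubgroup.map_le_iff_le_comap, idealMul_map, hA, hB]
    exact hle
  have hmul_nle : ¬ idealMul (A'.comap (f : R →+ S)) (B'.comap f) ≤ idealMul P P := fun h =>
    hnle (by simpa only [idealMul_map, hA, hB] using AddSubgroup.map_mono (f := (f : R →+ S)) h)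
  refine (hPprime _ _ (hA'.comap f) (hB'.comap f) hmul_le hmul_nle).imp (fun h => ?_) (fun h => ?_)
  · exact hA ▸ AddSubgroup.map_mono h
  · exact hB ▸ AddSubgroup.map_mono h

end Map

section Quotient

variable [NonUnitalRing R]

def qringHom (c : RingCon R) : R →ₙ+* c.Quotient :=
  { qmap c with map_mul' := fun _ _ => rfl }

theorem qringHom_surjective (c : RingCon R) : Function.Surjective (qringHom c) := fun y =>
  Quotient.inductionOn' y fun x => ⟨x, rfl⟩

theorem ker_qringHom_ringConOf (N : AddSubgroup R) (hr : ∀ x ∈ N, ∀ r : R, x * r ∈ N)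
    (hl : ∀ x ∈ N, ∀ r : R, r * x ∈ N) :
    (qringHom (ringConOf N hr hl) : R →+ (ringConOf N hr hl).Quotient).ker = N := by
  ext x
  change ((x : (ringConOf N hr hl).Quotient) = ((0 : R) : (ringConOf N hr hl).Quotient)) ↔ x ∈ N
  rw [RingCon.eq]
  change x - 0 ∈ N ↔ x ∈ N
  rw [sub_zero]

end Quotient

/-- If `I` is a two-sided ideal contained in an almost prime right ideal `P`, then
`P/I` is an almost prime right ideal of `R/I`. -/
theorem quotient_almostPrime [NonUnitalRing R] (I P : AddSubgroup R)
    (hI : IsTwoSidedIdealSub I) (hIP : I ≤ P) (hP : IsAlmostPrimeRight P) :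
    IsAlmostPrimeRight
      (AddSubgroup.map
        (qmap (ringConOf I (fun x hx r => (hI x hx r).1) (fun x hx r => (hI x hx r).2)))
        P) :=
  hP.map_of_surjective _ (qringHom_surjective _) ((ker_qringHom_ringConOf I _ _).trans_le hIP)
end
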